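/- arXiv:1003.1808 — 6 statements merged into one kernel-verified Lean document; each statement's English description precedes it below -/
import Mathlib

section
/- Let B be a matrix with strictly positive entries indexed by a finite set A, and define ν(B) = max over α,β,γ of B_{αβ}/B_{αγ}. Then for every nonnegative nonsingular matrix C with nonnegative entries such that CB has positive entries, ν(CB) ≤ ν(B). -/
open Matrix

/-- `ν(B) = max_{α,β,γ} B_{αβ} / B_{αγ}`. -/
noncomputable def nuMat {A : Type*} [Fintype A] (B : Matrix A A ℝ) : ℝ :=
  ⨆ t : A × A × A, B t.1 t.2.1 / B t.1 t.2.2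

theorem stmt0 {A : Type*} [Fintype A] [DecidableEq A] [Nonempty A]
    (B C : Matrix A A ℝ)
    (hB : ∀ α β, 0 < B α β)
    (hC : ∀ α β, 0 ≤ C α β)
    (hCns : IsUnit C.det)
    (hCB : ∀ α β, 0 < (C * B) α β) :
    nuMat (C * B) ≤ nuMat B := by
  apply ciSup_le
  rintro ⟨α, β, γ⟩
  have hbdd : BddAbove (Set.range fun t : A × A × A => B t.1 t.2.1 / B t.1 t.2.2) :=
    (Set.finite_range _).bddAbove
  rw [div_le_iff₀ (hCB α γ)]
  simp only [Matrix.mul_apply]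
  have hsum : ∀ k, C α k * B k β ≤ nuMat B * (C α k * B k γ) := by
    intro k
    have h1 : B k β / B k γ ≤ nuMat B := le_ciSup hbdd (k, β, γ)
    have h2 : B k β ≤ nuMat B * B k γ := (div_le_iff₀ (hB k γ)).mp h1
    calc C α k * B k β ≤ C α k * (nuMat B * B k γ) :=
          mul_le_mul_of_nonneg_left h2 (hC α k)
      _ = nuMat B * (C α k * B k γ) := by ring
  calc ∑ k, C α k * B k β ≤ ∑ k, nuMat B * (C α k * B k γ) :=
        Finset.sum_le_sum fun k _ => hsum k
    _ = nuMat B * ∑ k, C α k * B k γ := by rw [Finset.mul_sum]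
end

section
/- Let B be a matrix with strictly positive entries indexed by a finite set A and let m ≥ 1. Then max_β Σ_α (B^m)_{αβ} ≤ ν(B) · min_β Σ_α (B^m)_{αβ}, where ν(B) = max_{α,β,γ} B_{αβ}/B_{αγ}. -/
theorem stmt1 {A : Type*} [Fintype A] [DecidableEq A] [Nonempty A]
    (B : Matrix A A ℝ) (hB : ∀ α β, 0 < B α β) (m : ℕ) (hm : 1 ≤ m) :
    (⨆ β, ∑ α, (B ^ m) α β) ≤
      (⨆ t : A × A × A, B t.1 t.2.1 / B t.1 t.2.2) * (⨅ β, ∑ α, (B ^ m) α β) := by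
  obtain ⟨k, rfl⟩ : ∃ k, m = k + 1 := ⟨m - 1, (Nat.succ_pred_eq_of_pos hm).symm⟩
  set ν := ⨆ t : A × A × A, B t.1 t.2.1 / B t.1 t.2.2 with hν
  have hBnn : ∀ (n : ℕ) (α β : A), 0 ≤ (B ^ n) α β := by
    intro n
    induction n with
    | zero => intro α β; by_cases h : α = β <;> simp [Matrix.one_apply, h]
    | succ n ih =>
      intro α β
      rw [pow_succ, Matrix.mul_apply]
      exact Finset.sum_nonneg fun γ _ => mul_nonneg (ih α γ) (hB γ β).le
  have key : ∀ β β', ∑ α, (B ^ (k + 1)) α β ≤ ν * ∑ α, (B ^ (k + 1)) α β' := by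
    intro β β'
    have hratio : ∀ γ, B γ β ≤ ν * B γ β' := by
      intro γ
      have h1 : B γ β / B γ β' ≤ ν :=
        le_ciSup (f := fun t : A × A × A => B t.1 t.2.1 / B t.1 t.2.2) (Set.Finite.bddAbove (Set.finite_range _)) (⟨γ, β, β'⟩ : A × A × A)
      rw [div_le_iff₀ (hB γ β')] at h1
      linarith [h1]
    calc ∑ α, (B ^ (k + 1)) α β = ∑ γ, (∑ α, (B ^ k) α γ) * B γ β := by
          simp only [pow_succ, Matrix.mul_apply, Finset.sum_mul]
          rw [Finset.sum_comm]
      _ ≤ ∑ γ, (∑ α, (B ^ k) α γ) * (ν * B γ β') := by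
          apply Finset.sum_le_sum
          intro γ _
          exact mul_le_mul_of_nonneg_left (hratio γ)
            (Finset.sum_nonneg fun α _ => hBnn k α γ)
      _ = ν * ∑ α, (B ^ (k + 1)) α β' := by
          simp only [pow_succ, Matrix.mul_apply, Finset.sum_mul, Finset.mul_sum]
          rw [Finset.sum_comm]
          exact Finset.sum_congr rfl fun γ _ => Finset.sum_congr rfl fun α _ => by ring
  obtain ⟨β₀, hβ₀⟩ := exists_eq_ciInf_of_finite (f := fun β => ∑ α, (B ^ (k + 1)) α β)
  rw [← hβ₀]
  exact ciSup_le fun β => key β β₀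
end

section
/- Let R be a real m×k matrix. The subgroup R(Z^k) of R^m is dense in R^m if and only if for every a ∈ R^m, R^t a ∈ Z^k implies a = 0. -/
/-!
A subgroup `G` of a finite-dimensional real space `E` is dense iff no nonzero linear functional
takes only integer values on it. Suppose `G` is not dense, let `H` be its closure and `V` the
largest subspace contained in `H`, and pick a complement `W` of `V`. Then `H ∩ W` is discrete:
otherwise the directions of its small nonzero elements accumulate at a unit vector of `W`, all of
whose real multiples lie in `H` (approximate `t • a` by `⌊t / ‖x‖⌋ • x`). Hence `H ∩ W` has a
`ℤ`-basis that is `ℝ`-linearly independent, and stays so in `E ⧸ V ≠ 0`; a coordinate functional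
of a basis of `E ⧸ V` extending it is integer-valued on `H = V + (H ∩ W)`. On `ℝ^m` the functionals
are `x ↦ a ⬝ᵥ x`, and such a functional is integer-valued on `R ℤ^k` iff `Rᵀ a ∈ ℤ^k`.
-/

open Filter Topology Submodule

theorem tendsto_floor_div_mul {α : Type*} {l : Filter α} {r : α → ℝ} (hr_pos : ∀ n, 0 < r n)
    (hr : Tendsto r l (𝓝 0)) (t : ℝ) : Tendsto (fun n => (⌊t / r n⌋ : ℝ) * r n) l (𝓝 t) := by
  have hlower : Tendsto (fun n => t - r n) l (𝓝 t) := by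
    simpa using tendsto_const_nhds.sub hr
  refine tendsto_of_tendsto_of_tendsto_of_le_of_le hlower tendsto_const_nhds (fun n => ?_)
    (fun n => ?_)
  · have := Int.lt_floor_add_one (t / r n)
    rw [div_lt_iff₀ (hr_pos n)] at this
    linarith
  · exact (le_div_iff₀ (hr_pos n)).1 (Int.floor_le _)

namespace AddSubgroup

variable {E : Type*} [AddCommGroup E] [Module ℝ E]

def lineal (H : AddSubgroup E) : Submodule ℝ E where
  carrier := {x | ∀ t : ℝ, t • x ∈ H}
  add_mem' hx hy t := by rw [smul_add]; exact H.add_mem (hx t) (hy t)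
  zero_mem' t := by rw [smul_zero]; exact H.zero_mem
  smul_mem' c _ hx t := by rw [smul_smul]; exact hx (t * c)

theorem lineal_subset (H : AddSubgroup E) : (H.lineal : Set E) ⊆ H :=
  fun x hx => by simpa using hx 1

theorem mem_lineal_of_tendsto [TopologicalSpace E] [ContinuousSMul ℝ E] {H : AddSubgroup E}
    (hH : IsClosed (H : Set E)) {α : Type*} {l : Filter α} [l.NeBot] {x : α → E} {r : α → ℝ}
    {a : E} (hx : ∀ n, x n ∈ H) (hr_pos : ∀ n, 0 < r n) (hr : Tendsto r l (𝓝 0))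
    (ha : Tendsto (fun n => (r n)⁻¹ • x n) l (𝓝 a)) : a ∈ H.lineal := by
  intro t
  refine hH.mem_of_tendsto ((tendsto_floor_div_mul hr_pos hr t).smul ha)
    (Eventually.of_forall fun n => ?_)
  rw [SetLike.mem_coe, smul_smul, mul_assoc, mul_inv_cancel₀ (hr_pos n).ne', mul_one,
    Int.cast_smul_eq_zsmul]
  exact H.zsmul_mem (hx n) _

end AddSubgroup

theorem Module.Dual.exists_ne_zero_forall_mem_span_int {K V : Type*} [Field K] [CharZero K]
    [AddCommGroup V] [Module K V] [Nontrivial V] {s : Set V} (hs : LinearIndepOn K id s) :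
    ∃ f : Module.Dual K V, f ≠ 0 ∧ ∀ x ∈ span ℤ s, ∃ z : ℤ, f x = z := by
  let c := Module.Basis.extend hs
  obtain ⟨j⟩ := c.index_nonempty
  refine ⟨c.coord j, fun h => one_ne_zero (α := K) (by simpa using LinearMap.congr_fun h (c j)),
    fun x hx => ?_⟩
  have hx' : x ∈ span ℤ (Set.range c) :=
    span_mono (by rw [Module.Basis.range_extend]; exact hs.subset_extend _) hx
  refine ⟨(c.restrictScalars ℤ).repr ⟨x, hx'⟩ j, ?_⟩
  rw [c.coord_apply, ← c.restrictScalars_repr_apply ℤ ⟨x, hx'⟩, eq_intCast]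

theorem Dense.eq_zero_of_forall_intValued {X : Type*} [AddCommGroup X] [Module ℝ X]
    [TopologicalSpace X] {s : Set X} (hs : Dense s) {f : X →ₗ[ℝ] ℝ} (hf : Continuous f)
    (hfZ : ∀ x ∈ s, ∃ z : ℤ, f x = z) : f = 0 := by
  have hall : ∀ x, f x ∈ Set.range ((↑) : ℤ → ℝ) :=
    hs.induction (fun x hx => (hfZ x hx).imp fun _ => Eq.symm)
      (Real.isClosed_range_intCast.preimage hf)
  by_contra hf0
  obtain ⟨x, hx⟩ : ∃ x, f x ≠ 0 := by
    by_contra! h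
    exact hf0 (LinearMap.ext h)
  -- `f` takes the value `1 / 2` at `(2 * f x)⁻¹ • x`
  obtain ⟨z, hz⟩ := hall ((2 * f x)⁻¹ • x)
  rw [map_smul, smul_eq_mul] at hz
  field_simp at hz
  have : (z * 2 : ℤ) = 1 := by exact_mod_cast hz
  omega

section FiniteDimensional

variable {E : Type*} [NormedAddCommGroup E] [NormedSpace ℝ E] [FiniteDimensional ℝ E]

theorem discreteTopology_inf_of_disjoint_lineal {H : AddSubgroup E} (hH : IsClosed (H : Set E))
    {W : Submodule ℝ E} (hW : Disjoint H.lineal W) :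
    DiscreteTopology ↥(H.toIntSubmodule ⊓ W.restrictScalars ℤ) := by
  suffices ∃ ε > 0, ∀ x ∈ H, x ∈ W → x ≠ 0 → ε ≤ ‖x‖ by
    obtain ⟨ε, hε, h⟩ := this
    exact .of_forall_le_norm hε fun x hx => h x x.2.1 x.2.2 (by simpa using hx)
  by_contra! hsmall
  have h0 : (0 : E) ∈ closure (((H : Set E) ∩ W) \ {0}) := by
    refine Metric.mem_closure_iff.2 fun ε hε => ?_
    obtain ⟨x, hxH, hxW, hx0, hxε⟩ := hsmall ε hε
    exact ⟨x, ⟨⟨hxH, hxW⟩, hx0⟩, by rwa [dist_zero_left]⟩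
  obtain ⟨x, hx, hx_lim⟩ := mem_closure_iff_seq_limit.1 h0
  have hx0 : ∀ n, x n ≠ 0 := fun n => (hx n).2
  have hnorm : Tendsto (fun n => ‖x n‖) atTop (𝓝 0) := by simpa using hx_lim.norm
  obtain ⟨a, ha, φ, hφ, ha_lim⟩ := (isCompact_sphere (0 : E) 1).tendsto_subseq
    (x := fun n => (‖x n‖⁻¹ : ℝ) • x n) fun n => by
      rw [mem_sphere_zero_iff_norm, norm_smul, norm_inv, norm_norm,
        inv_mul_cancel₀ (norm_ne_zero_iff.2 (hx0 n))]
  have haW : a ∈ W := W.closed_of_finiteDimensional.mem_of_tendsto ha_lim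
    (Eventually.of_forall fun n => W.smul_mem _ (hx (φ n)).1.2)
  have haH : a ∈ H.lineal := AddSubgroup.mem_lineal_of_tendsto hH (fun n => (hx (φ n)).1.1)
    (fun n => norm_pos_iff.2 (hx0 (φ n))) (hnorm.comp hφ.tendsto_atTop) ha_lim
  have : a = 0 := (Submodule.disjoint_def.1 hW) a haH haW
  simp [this] at ha

theorem exists_linearIndepOn_span_int_eq_of_discrete (L : Submodule ℤ E) [DiscreteTopology L] :
    ∃ s : Set E, LinearIndepOn ℝ id s ∧ span ℤ s = L := by
  let S := span ℝ (L : Set E)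
  let L₀ := ZLattice.comap ℝ L S.subtype
  have : DiscreteTopology L₀ :=
    ZLattice.comap_discreteTopology ℝ L (LinearMap.continuous_of_finiteDimensional _)
      (injective_subtype S)
  have hL₀ : L₀.map (S.subtype.restrictScalars ℤ) = L :=
    Submodule.map_comap_eq_of_le fun x hx => ⟨⟨x, subset_span hx⟩, rfl⟩
  have : IsZLattice ℝ L₀ := ⟨by
    rw [← (Submodule.map_injective_of_injective (injective_subtype S)).eq_iff, map_span,
      Submodule.map_top, range_subtype, ← LinearMap.coe_restrictScalars ℤ, ← map_coe, hL₀]⟩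
  let b := Module.Free.chooseBasis ℤ L₀
  let c := b.ofZLatticeBasis ℝ L₀
  refine ⟨S.subtype '' Set.range c, ?_, ?_⟩
  · exact ((linearIndepOn_id_range_iff c.injective).2 c.linearIndependent).image (by simp)
  · rw [← LinearMap.coe_restrictScalars ℤ, ← map_span, b.ofZLatticeBasis_span ℝ, hL₀]

theorem AddSubgroup.exists_dual_ne_zero_intValued_of_not_dense (G : AddSubgroup E)
    (hG : ¬Dense (G : Set E)) :
    ∃ f : Module.Dual ℝ E, f ≠ 0 ∧ ∀ g ∈ G, ∃ z : ℤ, f g = z := by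
  set H := G.topologicalClosure
  set V := H.lineal
  have hV : V ≠ ⊤ := fun hV => hG <| dense_iff_closure_eq.2 <|
    Set.eq_univ_of_univ_subset fun x _ => H.lineal_subset (hV ▸ Submodule.mem_top : x ∈ V)
  obtain ⟨W, hVW⟩ := V.exists_isCompl
  set L := H.toIntSubmodule ⊓ W.restrictScalars ℤ
  have : DiscreteTopology L :=
    discreteTopology_inf_of_disjoint_lineal G.isClosed_topologicalClosure hVW.disjoint
  obtain ⟨s, hs, hsL⟩ := exists_linearIndepOn_span_int_eq_of_discrete L
  have hsW : span ℝ s ≤ W := span_le.2 fun x hx => (hsL ▸ subset_span hx : x ∈ L).2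
  have : Nontrivial (E ⧸ V) := Submodule.Quotient.nontrivial_iff.2 hV
  obtain ⟨f, hf0, hfZ⟩ := Module.Dual.exists_ne_zero_forall_mem_span_int
    (hs.image (f := V.mkQ) (by rw [ker_mkQ]; exact hVW.disjoint.symm.mono_left hsW))
  refine ⟨f ∘ₗ V.mkQ, fun h => hf0 ?_, fun x hx => ?_⟩
  · rwa [← LinearMap.zero_comp V.mkQ, LinearMap.cancel_right V.mkQ_surjective] at h
  obtain ⟨v, hv, w, hw, rfl⟩ := Submodule.mem_sup.1
    (hVW.sup_eq_top ▸ Submodule.mem_top : x ∈ V ⊔ W)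
  have hwL : w ∈ span ℤ s := hsL ▸ ⟨by
    simpa using H.sub_mem (G.le_topologicalClosure hx) (H.lineal_subset hv), hw⟩
  simpa [(Submodule.Quotient.mk_eq_zero V).2 hv] using
    hfZ _ (apply_mem_span_image_of_mem_span (V.mkQ.restrictScalars ℤ) hwL)

theorem AddSubgroup.dense_iff_forall_intValued_eq_zero (G : AddSubgroup E) :
    Dense (G : Set E) ↔ ∀ f : Module.Dual ℝ E, (∀ g ∈ G, ∃ z : ℤ, f g = z) → f = 0 := by
  refine ⟨fun hG f hfZ => hG.eq_zero_of_forall_intValued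
    (LinearMap.continuous_of_finiteDimensional f) hfZ, fun h => ?_⟩
  by_contra hG
  obtain ⟨f, hf0, hfZ⟩ := G.exists_dual_ne_zero_intValued_of_not_dense hG
  exact hf0 (h f hfZ)

end FiniteDimensional

theorem forall_dotProduct_intCast_iff {ι : Type*} [Fintype ι] [DecidableEq ι] (c : ι → ℝ) :
    (∀ v : ι → ℤ, ∃ z : ℤ, c ⬝ᵥ (fun j => (v j : ℝ)) = z) ↔ ∀ j, ∃ z : ℤ, c j = z := by
  refine ⟨fun h j => ?_, fun h v => ?_⟩
  · simpa [Pi.single_apply, dotProduct] using h (Pi.single j 1)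
  · choose z hz using h
    exact ⟨∑ j, z j * v j, by simp [dotProduct, hz]⟩

theorem stmt2 (m k : ℕ) (R : Matrix (Fin m) (Fin k) ℝ) :
    Dense (Set.range fun v : Fin k → ℤ => R.mulVec fun j => (v j : ℝ)) ↔
      ∀ a : Fin m → ℝ, (∀ j, ∃ z : ℤ, R.transpose.mulVec a j = (z : ℝ)) → a = 0 := by
  let φ : (Fin k → ℤ) →+ (Fin m → ℝ) :=
    R.mulVecLin.toAddMonoidHom.comp ((Int.castAddHom ℝ).compLeft (Fin k))
  rw [show (Set.range fun v : Fin k → ℤ => R.mulVec fun j => (v j : ℝ)) = φ.range from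
    φ.coe_range.symm,
    AddSubgroup.dense_iff_forall_intValued_eq_zero, (dotProductEquiv ℝ (Fin m)).surjective.forall]
  refine forall_congr' fun a => ?_
  simp only [map_eq_zero_iff _ (dotProductEquiv ℝ (Fin m)).injective, AddMonoidHom.mem_range,
    forall_exists_index, forall_apply_eq_imp_iff, dotProductEquiv_apply_apply]
  have hφ (v : Fin k → ℤ) : a ⬝ᵥ φ v = R.transpose.mulVec a ⬝ᵥ fun j => (v j : ℝ) := by
    rw [Matrix.mulVec_transpose, ← Matrix.dotProduct_mulVec]
    rfl
  simp only [hφ, forall_dotProduct_intCast_iff]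
end

section
/- Let T be an ergodic automorphism of a probability space (X,B,μ) and let (Ξ_n) be a sequence of measurable sets (Rokhlin towers for T) such that liminf μ(Ξ_n) > 0; assume moreover (King's lemma conclusion) that for every B ∈ B, μ(B ∩ Ξ_n) - μ(B)μ(Ξ_n) → 0. Then for μ-almost every x ∈ X, the point x belongs to Ξ_n for infinitely many n. -/
open MeasureTheory Filter

theorem stmt9 {X : Type*} [MeasurableSpace X] (μ : Measure X) [IsProbabilityMeasure μ]
    (T : X → X) (hT : Ergodic T μ)
    (Ξ : ℕ → Set X) (hmeas : ∀ n, MeasurableSet (Ξ n))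
    (hliminf : 0 < Filter.atTop.liminf fun n => μ (Ξ n))
    (hking : ∀ B : Set X, MeasurableSet B →
      Tendsto (fun n => (μ (B ∩ Ξ n)).toReal - (μ B).toReal * (μ (Ξ n)).toReal)
        atTop (nhds 0)) :
    ∀ᵐ x ∂μ, ∃ᶠ n in atTop, x ∈ Ξ n := by
  obtain ⟨c, hc0, hcl⟩ := exists_between hliminf
  have hcne : c ≠ ⊤ := by
    have h1 : atTop.liminf (fun n => μ (Ξ n)) ≤ 1 := by
      apply liminf_le_of_frequently_le
        (Eventually.frequently (Eventually.of_forall fun n => prob_le_one))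
    exact (hcl.trans_le h1).ne_top
  have hcr : 0 < c.toReal := ENNReal.toReal_pos hc0.ne' hcne
  have hev : ∀ᶠ n in atTop, c < μ (Ξ n) := eventually_lt_of_lt_liminf hcl
  have key : ∀ N : ℕ, μ ((⋃ k, ⋃ _ : N ≤ k, Ξ k)ᶜ) = 0 := by
    intro N
    set B := (⋃ k, ⋃ _ : N ≤ k, Ξ k)ᶜ with hB
    have hBm : MeasurableSet B :=
      (MeasurableSet.iUnion fun k => MeasurableSet.iUnion fun _ => hmeas k).compl
    have hdis : ∀ n, N ≤ n → B ∩ Ξ n = ∅ := by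
      intro n hn
      ext x
      simp only [Set.mem_inter_iff, Set.mem_empty_iff_false, iff_false, not_and]
      intro hxB hxn
      exact hxB (Set.mem_iUnion.2 ⟨n, Set.mem_iUnion.2 ⟨hn, hxn⟩⟩)
    have h1 : Tendsto (fun n => (μ B).toReal * (μ (Ξ n)).toReal) atTop (nhds 0) := by
      have h2 := (hking B hBm).neg
      rw [neg_zero] at h2
      refine h2.congr' ?_
      filter_upwards [eventually_ge_atTop N] with n hn
      rw [hdis n hn]
      simp
    by_contra hne
    have hpos : 0 < (μ B).toReal := ENNReal.toReal_pos hne (measure_ne_top μ B)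
    have hlow : ∀ᶠ n in atTop,
        (μ B).toReal * c.toReal ≤ (μ B).toReal * (μ (Ξ n)).toReal := by
      filter_upwards [hev] with n hn
      exact mul_le_mul_of_nonneg_left
        ((ENNReal.toReal_le_toReal hcne (measure_ne_top μ _)).2 hn.le) hpos.le
    have hsmall : ∀ᶠ n in atTop,
        (μ B).toReal * (μ (Ξ n)).toReal < (μ B).toReal * c.toReal :=
      h1.eventually (gt_mem_nhds (mul_pos hpos hcr))
    obtain ⟨n, h1n, h2n⟩ := (hlow.and hsmall).exists
    exact absurd (h1n.trans_lt h2n) (lt_irrefl _)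
  have hae : ∀ᵐ x ∂μ, ∀ N : ℕ, x ∈ ⋃ k, ⋃ _ : N ≤ k, Ξ k := by
    rw [ae_all_iff]
    intro N
    filter_upwards [measure_eq_zero_iff_ae_notMem.1 (key N)] with x hx
    exact Set.not_notMem.1 hx
  filter_upwards [hae] with x hx
  rw [frequently_atTop]
  intro N
  obtain ⟨k, hk⟩ := Set.mem_iUnion.1 (hx N)
  obtain ⟨hNk, hxk⟩ := Set.mem_iUnion.1 hk
  exact ⟨k, hNk, hxk⟩
end

section
/- For each natural n ≥ 1, the 4×4 matrix M(n) with rows (1,1,1,1), (n,n+1,0,0), (0,0,2,1), (n+1,n+2,2,2) has characteristic polynomial factoring as (x² - a⁺_n x + 1)(x² - a⁻_n x + 1) where a^±_n = (n + 6 ± √(n² + 4))/2; equivalently, its four eigenvalues are ρ = (a^±_n ± √((a^±_n)² - 4))/2. -/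
/-!
The characteristic polynomial of `M(n)` is the palindromic quartic
`x⁴ - (n+6)x³ + (3n+10)x² - (n+6)x + 1`, and `(x² - ax + 1)(x² - bx + 1)` is that quartic exactly
when `a + b = n + 6` and `ab = 3n + 8`, i.e. when `a, b` are the roots of `y² - (n+6)y + 3n + 8`,
whose discriminant is `n² + 4`.
-/

open Polynomial

theorem Polynomial.palindromic_quadratic_mul {R : Type*} [CommRing R] (a b : R) :
    (X ^ 2 - C a * X + 1) * (X ^ 2 - C b * X + 1) =
      X ^ 4 - C (a + b) * X ^ 3 + C (a * b + 2) * X ^ 2 - C (a + b) * X + 1 := by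
  simp only [C_add, C_mul, C_ofNat]
  ring

theorem charpoly_eq_palindromic_quartic {R : Type*} [CommRing R] (t : R) :
    (!![1, 1, 1, 1;
        t, t + 1, 0, 0;
        0, 0, 2, 1;
        t + 1, t + 2, 2, 2]).charpoly =
      X ^ 4 - C (t + 6) * X ^ 3 + C (3 * t + 10) * X ^ 2 - C (t + 6) * X + 1 := by
  rw [Matrix.charpoly, Matrix.det_succ_row_zero]
  simp only [Fin.sum_univ_succ, Finset.univ_unique, Finset.sum_singleton, Matrix.det_fin_three,
    Matrix.submatrix_apply, Fin.succAbove, Matrix.charmatrix_apply, Matrix.of_apply, Matrix.cons_val',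
    Matrix.cons_val, Matrix.cons_val_fin_one, Matrix.diagonal_apply_eq, Matrix.diagonal_apply_ne,
    Fin.reduceSucc, Fin.reduceCastSucc, Fin.reduceLT, Fin.reduceEq, Fin.isValue, ne_eq, not_false_eq_true,
    ↓reduceIte, map_add, map_one, map_zero, map_ofNat, Fin.default_eq_zero, Fin.succ_zero_eq_one,
    Fin.succ_one_eq_two, Fin.castSucc_zero, Fin.castSucc_one, Fin.lt_one_iff, Fin.succ_pos, Fin.val_succ,
    Fin.val_zero, Matrix.cons_val_zero, Matrix.cons_val_one, Matrix.cons_val_succ, lt_self_iff_false,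
    not_lt_zero, map_mul]
  ring

theorem stmt10_general (n : ℕ) :
    (Matrix.charpoly
        (!![1, 1, 1, 1;
            (n : ℝ), (n : ℝ) + 1, 0, 0;
            0, 0, 2, 1;
            (n : ℝ) + 1, (n : ℝ) + 2, 2, 2])) =
      (X ^ 2 - C (((n : ℝ) + 6 + Real.sqrt ((n : ℝ) ^ 2 + 4)) / 2) * X + 1) *
        (X ^ 2 - C (((n : ℝ) + 6 - Real.sqrt ((n : ℝ) ^ 2 + 4)) / 2) * X + 1) := by
  set s := Real.sqrt ((n : ℝ) ^ 2 + 4)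
  have hs : s ^ 2 = (n : ℝ) ^ 2 + 4 := Real.sq_sqrt (by positivity)
  have hsum : ((n : ℝ) + 6 + s) / 2 + ((n : ℝ) + 6 - s) / 2 = (n : ℝ) + 6 := by ring
  have hprod : ((n : ℝ) + 6 + s) / 2 * (((n : ℝ) + 6 - s) / 2) + 2 = 3 * (n : ℝ) + 10 := by
    linear_combination (-1 / 4) * hs
  rw [charpoly_eq_palindromic_quartic, palindromic_quadratic_mul, hsum, hprod]

theorem stmt10 (n : ℕ) (hn : 1 ≤ n) :
    (Matrix.charpoly
        (!![1, 1, 1, 1;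
            (n : ℝ), (n : ℝ) + 1, 0, 0;
            0, 0, 2, 1;
            (n : ℝ) + 1, (n : ℝ) + 2, 2, 2])) =
      (X ^ 2 - C (((n : ℝ) + 6 + Real.sqrt ((n : ℝ) ^ 2 + 4)) / 2) * X + 1) *
        (X ^ 2 - C (((n : ℝ) + 6 - Real.sqrt ((n : ℝ) ^ 2 + 4)) / 2) * X + 1) :=
  stmt10_general n
end

section
/- Let T be an ergodic automorphism of a standard probability space (X,d,μ) with X a compact metric space, φ: X → G ⊆ R^ℓ an integrable Borel cocycle with zero mean. Suppose (q_n) is an increasing sequence of naturals and (C_n) Borel sets with μ(C_n) → α > 0, μ(C_n △ T^{-1}C_n) → 0, sup_{x∈C_n} d(x, T^{q_n}x) → 0, and φ^{(q_n)}(x) = g_n for all x ∈ C_n with g_n → g in G. Then g ∈ E(φ). -/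
/-!
By ergodicity, finitely many preimages `T^{-k} B`, `k < K`, cover all of `X` up to a small set.
Almost invariance of `C n` gives `μ (C n ∩ T^{-k} B) ≤ μ (C n ∩ B) + k μ (C n ∆ T⁻¹ C n)`, so
`μ (C n ∩ B)` stays bounded below. Squeezing `B` between a closed and an open set, rigidity
`T^{q n} ≈ id` on `C n` forces most of `C n ∩ B` back into `B` at time `q n`, and there the
cocycle `φ^{(q n)}` equals `v n`, which lies in any neighbourhood of `g` for large `n`.
-/

open MeasureTheory Filter

/-- The `n`-th iterate (with `n : ℤ`) of a measurable automorphism `T`. -/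
noncomputable def iterZ {X : Type*} [MeasurableSpace X] (T : X ≃ᵐ X) (n : ℤ) : X → X :=
  if 0 ≤ n then (⇑T)^[n.toNat] else (⇑T.symm)^[(-n).toNat]

/-- The Birkhoff cocycle `φ^{(n)}` (with `n : ℤ`) of `φ` over the automorphism `T`. -/
noncomputable def birkhoffZ {X : Type*} [MeasurableSpace X] {G : Type*} [AddCommGroup G]
    (T : X ≃ᵐ X) (φ : X → G) (n : ℤ) (x : X) : G :=
  if 0 ≤ n then ∑ j ∈ Finset.range n.toNat, φ ((⇑T)^[j] x)
  else -∑ j ∈ Finset.range (-n).toNat, φ ((⇑T.symm)^[j + 1] x)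

/-- `g` is a (finite) essential value of the cocycle `φ` for `T`. -/
def IsEssentialValue {X : Type*} [MeasurableSpace X] {G : Type*} [AddCommGroup G]
    [TopologicalSpace G] (μ : Measure X) (T : X ≃ᵐ X) (φ : X → G) (g : G) : Prop :=
  ∀ V ∈ nhds g, ∀ B : Set X, MeasurableSet B → 0 < μ B →
    ∃ n : ℤ, 0 < μ (B ∩ iterZ T n ⁻¹' B ∩ {x | birkhoffZ T φ n x ∈ V})

open scoped ENNReal symmDiff Topology

section Recurrence

variable {X : Type*} [MeasurableSpace X] {μ : Measure X} {f : X → X}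

theorem MeasureTheory.MeasurePreserving.measure_inter_preimage_iterate_le
    (hf : MeasurePreserving f μ μ) {C B : Set X} (hC : NullMeasurableSet C μ)
    (hB : NullMeasurableSet B μ) (k : ℕ) :
    μ (C ∩ f^[k] ⁻¹' B) ≤ μ (C ∩ B) + k * μ (C ∆ (f ⁻¹' C)) := by
  have hcover : C ∩ f^[k] ⁻¹' B ⊆ f^[k] ⁻¹' (C ∩ B) ∪ C ∆ (f^[k] ⁻¹' C) := by
    rintro x ⟨hxC, hxB⟩
    by_cases hx : f^[k] x ∈ C
    · exact Or.inl ⟨hx, hxB⟩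
    · exact Or.inr (Or.inl ⟨hxC, hx⟩)
  calc μ (C ∩ f^[k] ⁻¹' B)
      ≤ μ (f^[k] ⁻¹' (C ∩ B)) + μ (C ∆ (f^[k] ⁻¹' C)) :=
        (measure_mono hcover).trans (measure_union_le _ _)
    _ ≤ μ (C ∩ B) + k * μ (C ∆ (f ⁻¹' C)) := by
      rw [(hf.iterate k).measure_preimage (hC.inter hB), ← nsmul_eq_mul]
      gcongr
      exact hf.measure_symmDiff_preimage_iterate_le hC k

theorem MeasureTheory.MeasurePreserving.measure_le_mul_measure_inter_add
    (hf : MeasurePreserving f μ μ) {C B : Set X} (hC : NullMeasurableSet C μ)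
    (hB : NullMeasurableSet B μ) (K : ℕ) :
    μ C ≤ K * (μ (C ∩ B) + K * μ (C ∆ (f ⁻¹' C))) + μ (⋃ k ∈ Finset.range K, f^[k] ⁻¹' B)ᶜ := by
  have hcover : C ⊆
      (⋃ k ∈ Finset.range K, C ∩ f^[k] ⁻¹' B) ∪ (⋃ k ∈ Finset.range K, f^[k] ⁻¹' B)ᶜ := by
    intro x hx
    by_cases hW : x ∈ ⋃ k ∈ Finset.range K, f^[k] ⁻¹' B
    · obtain ⟨k, hk, hxk⟩ := Set.mem_iUnion₂.1 hW
      exact Or.inl (Set.mem_iUnion₂.2 ⟨k, hk, hx, hxk⟩)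
    · exact Or.inr hW
  grw [hcover, measure_union_le, measure_biUnion_finset_le]
  gcongr
  calc ∑ k ∈ Finset.range K, μ (C ∩ f^[k] ⁻¹' B)
      ≤ ∑ _k ∈ Finset.range K, (μ (C ∩ B) + K * μ (C ∆ (f ⁻¹' C))) := by
        refine Finset.sum_le_sum fun k hk => ?_
        grw [hf.measure_inter_preimage_iterate_le hC hB k, (Finset.mem_range.1 hk).le]
    _ = K * (μ (C ∩ B) + K * μ (C ∆ (f ⁻¹' C))) := by simp [mul_add]

theorem Ergodic.tendsto_measure_compl_biUnion_preimage_iterate [IsFiniteMeasure μ]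
    (hf : Ergodic f μ) {B : Set X} (hB : MeasurableSet B) (hB0 : μ B ≠ 0) :
    Tendsto (fun K => μ (⋃ k ∈ Finset.range K, f^[k] ⁻¹' B)ᶜ) atTop (𝓝 0) := by
  set U := ⋃ k, f^[k] ⁻¹' B
  have hUinv : f ⁻¹' U ⊆ U := by
    simp only [U, Set.preimage_iUnion, ← Set.preimage_comp, ← Function.iterate_succ]
    exact Set.iUnion_subset fun k => Set.subset_iUnion (fun k => f^[k] ⁻¹' B) (k + 1)
  have hUmeas : MeasurableSet U :=
    .iUnion fun k => hB.preimage (hf.measurable.iterate k)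
  have hUc : μ Uᶜ = 0 := by
    rcases hf.ae_empty_or_univ_of_preimage_ae_le hUmeas.nullMeasurableSet
      hUinv.eventuallyLE with h | h
    · exact absurd (measure_mono_null (Set.subset_iUnion (fun k => f^[k] ⁻¹' B) 0)
        (ae_eq_empty.1 h)) hB0
    · exact ae_eq_univ.1 h
  have hlim := tendsto_measure_iInter_atTop (μ := μ)
    (s := fun K => (⋃ k ∈ Finset.range K, f^[k] ⁻¹' B)ᶜ)
    (fun K => (MeasurableSet.biUnion (Set.to_countable _)
      fun k _ => hB.preimage (hf.measurable.iterate k)).compl.nullMeasurableSet)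
    (fun K L hKL => Set.compl_subset_compl.2 (Set.biUnion_subset_biUnion_left
      (by simpa using Finset.range_subset_range.2 hKL)))
    ⟨0, measure_ne_top _ _⟩
  rwa [← Set.compl_iUnion, show ⋃ K, ⋃ k ∈ Finset.range K, f^[k] ⁻¹' B = U by
    simpa using Set.biUnion_lt_eq_iUnion, hUc] at hlim

theorem Ergodic.exists_eventually_le_measure_inter [IsProbabilityMeasure μ] (hf : Ergodic f μ)
    {C : ℕ → Set X} (hC : ∀ n, NullMeasurableSet (C n) μ) {a : ℝ≥0∞} (ha : a ≠ 0)
    (hCa : ∀ᶠ n in atTop, a ≤ μ (C n))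
    (hCinv : Tendsto (fun n => μ (C n ∆ (f ⁻¹' C n))) atTop (𝓝 0))
    {B : Set X} (hB : MeasurableSet B) (hB0 : μ B ≠ 0) :
    ∃ c ≠ 0, ∀ᶠ n in atTop, c ≤ μ (C n ∩ B) := by
  have ha2 : a / 2 ≠ 0 := (ENNReal.half_pos ha).ne'
  obtain ⟨K, hK⟩ := ((hf.tendsto_measure_compl_biUnion_preimage_iterate hB hB0).eventually
    (gt_mem_nhds (pos_iff_ne_zero.2 ha2))).exists
  set W := (⋃ k ∈ Finset.range K, f^[k] ⁻¹' B)ᶜ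
  have herr : Tendsto (fun n => K * (K * μ (C n ∆ (f ⁻¹' C n))) + μ W) atTop (𝓝 (μ W)) := by
    simpa using ((ENNReal.Tendsto.const_mul (ENNReal.Tendsto.const_mul hCinv
      (Or.inr (ENNReal.natCast_ne_top K))) (Or.inr (ENNReal.natCast_ne_top K)))).add_const (μ W)
  refine ⟨a / 2 / K, ENNReal.div_ne_zero.2 ⟨ha2, ENNReal.natCast_ne_top K⟩, ?_⟩
  filter_upwards [hCa, herr.eventually (gt_mem_nhds hK)] with n hn hn_err
  rw [ENNReal.div_le_iff_le_mul (Or.inr (measure_ne_top _ _))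
    (Or.inl (ENNReal.natCast_ne_top K)), mul_comm]
  by_contra! hlt
  have hcover := hf.toMeasurePreserving.measure_le_mul_measure_inter_add (hC n)
    hB.nullMeasurableSet K
  rw [mul_add, add_assoc] at hcover
  have hsum := ENNReal.add_lt_add hlt hn_err
  rw [ENNReal.add_halves] at hsum
  exact (hn.trans hcover).not_gt hsum

end Recurrence

section Rigidity

variable {X : Type*} [PseudoMetricSpace X] [CompactSpace X] [MeasurableSpace X] [BorelSpace X]
  {μ : Measure X}

theorem exists_measure_inter_sdiff_preimage_le_of_dist_le [IsFiniteMeasure μ] {B : Set X}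
    (hB : MeasurableSet B) {ε : ℝ≥0∞} (hε : ε ≠ 0) :
    ∃ η > 0, ∀ S : X → X, MeasurePreserving S μ μ → ∀ D : Set X,
      (∀ x ∈ D, dist x (S x) ≤ η) → μ ((D ∩ B) \ S ⁻¹' B) ≤ ε := by
  have hε2 : ε / 2 ≠ 0 := (ENNReal.half_pos hε).ne'
  obtain ⟨F, hFB, hF, hBF⟩ := hB.exists_isClosed_sdiff_lt (measure_ne_top μ B) hε2
  obtain ⟨U, hBU, hU, -, hUB⟩ := hB.exists_isOpen_sdiff_lt (measure_ne_top μ B) hε2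
  obtain ⟨η, hη, hηU⟩ := hF.isCompact.exists_cthickening_subset_open hU (hFB.trans hBU)
  refine ⟨η, hη, fun S hS D hD => ?_⟩
  have hcover : (D ∩ B) \ S ⁻¹' B ⊆ (B \ F) ∪ S ⁻¹' (U \ B) := by
    rintro x ⟨⟨hxD, hxB⟩, hSx⟩
    by_cases hxF : x ∈ F
    · refine Or.inr ⟨hηU ?_, hSx⟩
      exact Metric.mem_cthickening_of_dist_le _ x η F hxF (dist_comm x (S x) ▸ hD x hxD)
    · exact Or.inl ⟨hxB, hxF⟩
  calc μ ((D ∩ B) \ S ⁻¹' B) ≤ μ (B \ F) + μ (S ⁻¹' (U \ B)) :=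
        (measure_mono hcover).trans (measure_union_le _ _)
    _ ≤ ε / 2 + ε / 2 := by
        rw [hS.measure_preimage (hU.measurableSet.diff hB).nullMeasurableSet]
        exact add_le_add hBF.le hUB.le
    _ = ε := ENNReal.add_halves ε

theorem Ergodic.eventually_measure_inter_preimage_iterate_pos [IsProbabilityMeasure μ]
    {f : X → X} (hf : Ergodic f μ) {q : ℕ → ℕ} {C : ℕ → Set X}
    (hC : ∀ n, MeasurableSet (C n)) {a : ℝ≥0∞} (ha : a ≠ 0) (hCa : ∀ᶠ n in atTop, a ≤ μ (C n))
    (hCinv : Tendsto (fun n => μ (C n ∆ (f ⁻¹' C n))) atTop (𝓝 0))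
    (hrigid : ∀ ε > 0, ∀ᶠ n in atTop, ∀ x ∈ C n, dist x (f^[q n] x) ≤ ε)
    {B : Set X} (hB : MeasurableSet B) (hB0 : μ B ≠ 0) :
    ∀ᶠ n in atTop, 0 < μ (C n ∩ B ∩ f^[q n] ⁻¹' B) := by
  obtain ⟨c, hc, hcC⟩ :=
    hf.exists_eventually_le_measure_inter (fun n => (hC n).nullMeasurableSet) ha hCa hCinv hB hB0
  obtain ⟨η, hη, hηB⟩ := exists_measure_inter_sdiff_preimage_le_of_dist_le (μ := μ) hB
    (ENNReal.half_pos hc).ne'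
  filter_upwards [hcC, hrigid η hη] with n hn hnη
  have hc_top : c ≠ ∞ := (hn.trans_lt (measure_lt_top μ _)).ne
  refine pos_iff_ne_zero.2 fun h0 => (ENNReal.half_lt_self hc hc_top).not_ge ?_
  calc c ≤ μ (C n ∩ B) := hn
    _ ≤ μ (C n ∩ B ∩ f^[q n] ⁻¹' B) + μ ((C n ∩ B) \ f^[q n] ⁻¹' B) :=
        measure_le_inter_add_sdiff _ _ _
    _ ≤ c / 2 := by
        rw [h0, zero_add]
        exact hηB _ (hf.toMeasurePreserving.iterate _) (C n) hnη

end Rigidity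

section IntegerIterates

variable {X : Type*} [MeasurableSpace X] (T : X ≃ᵐ X) (k : ℕ)

@[simp]
theorem iterZ_natCast : iterZ T k = (⇑T)^[k] := by
  simp [iterZ]

@[simp]
theorem birkhoffZ_natCast {G : Type*} [AddCommGroup G] (φ : X → G) (x : X) :
    birkhoffZ T φ k x = ∑ j ∈ Finset.range k, φ ((⇑T)^[j] x) := by
  simp [birkhoffZ]

end IntegerIterates

theorem stmt18_general {X : Type*} [MeasurableSpace X] [MetricSpace X] [CompactSpace X] [BorelSpace X]
    (μ : Measure X) [IsProbabilityMeasure μ]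
    (T : X ≃ᵐ X) (hT : Ergodic (⇑T) μ)
    {ℓ : ℕ} (φ : X → Fin ℓ → ℝ) (q : ℕ → ℕ)
    (C : ℕ → Set X) (hCmeas : ∀ n, MeasurableSet (C n))
    (α : ℝ) (hα : 0 < α)
    (hCμ : Tendsto (fun n => (μ (C n)).toReal) atTop (nhds α))
    (hCinv : Tendsto (fun n => μ (symmDiff (C n) (⇑T ⁻¹' C n))) atTop (nhds 0))
    (hdist : ∀ ε > (0 : ℝ), ∃ N, ∀ n ≥ N, ∀ x ∈ C n, dist x ((⇑T)^[q n] x) ≤ ε)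
    (v : ℕ → Fin ℓ → ℝ) (g : Fin ℓ → ℝ)
    (hv : ∀ n : ℕ, ∀ x ∈ C n, (∑ j ∈ Finset.range (q n), φ ((⇑T)^[j] x)) = v n)
    (hvg : Tendsto v atTop (nhds g)) :
    IsEssentialValue μ T φ g := by
  intro V hV B hB hB0
  have hCα : ∀ᶠ n in atTop, ENNReal.ofReal (α / 2) ≤ μ (C n) :=
    (hCμ.eventually (eventually_ge_nhds (half_lt_self hα))).mono
      fun n hn => ENNReal.ofReal_le_of_le_toReal hn
  have hrecur := hT.eventually_measure_inter_preimage_iterate_pos hCmeas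
    (ENNReal.ofReal_pos.2 (half_pos hα)).ne' hCα hCinv
    (fun ε hε => eventually_atTop.2 (hdist ε hε)) hB hB0.ne'
  obtain ⟨n, hpos, hvV⟩ := (hrecur.and (hvg hV)).exists
  refine ⟨q n, hpos.trans_le (measure_mono ?_)⟩
  rintro x ⟨⟨hxC, hxB⟩, hxB'⟩
  exact ⟨⟨hxB, by simpa using hxB'⟩, by simpa [hv n x hxC] using hvV⟩

theorem stmt18 {X : Type*} [MeasurableSpace X] [MetricSpace X] [CompactSpace X] [BorelSpace X]
    (μ : Measure X) [IsProbabilityMeasure μ]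
    (T : X ≃ᵐ X) (hT : Ergodic (⇑T) μ)
    {ℓ : ℕ} (G : AddSubgroup (Fin ℓ → ℝ)) (hG : IsClosed (G : Set (Fin ℓ → ℝ)))
    (φ : X → Fin ℓ → ℝ) (hφmeas : Measurable φ) (hφint : Integrable φ μ)
    (hφG : ∀ x, φ x ∈ G) (hmean : ∫ x, φ x ∂μ = 0)
    (q : ℕ → ℕ) (hq : StrictMono q)
    (C : ℕ → Set X) (hCmeas : ∀ n, MeasurableSet (C n))
    (α : ℝ) (hα : 0 < α)
    (hCμ : Tendsto (fun n => (μ (C n)).toReal) atTop (nhds α))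
    (hCinv : Tendsto (fun n => μ (symmDiff (C n) (⇑T ⁻¹' C n))) atTop (nhds 0))
    (hdist : ∀ ε > (0 : ℝ), ∃ N, ∀ n ≥ N, ∀ x ∈ C n, dist x ((⇑T)^[q n] x) ≤ ε)
    (v : ℕ → Fin ℓ → ℝ) (g : Fin ℓ → ℝ)
    (hv : ∀ n : ℕ, ∀ x ∈ C n, (∑ j ∈ Finset.range (q n), φ ((⇑T)^[j] x)) = v n)
    (hvg : Tendsto v atTop (nhds g)) :
    IsEssentialValue μ T φ g :=
  stmt18_general μ T hT φ q C hCmeas α hα hCμ hCinv hdist v g hv hvg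
end
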